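/- The square formed by the inclusions X ↪ X ∪ {a}, Y ↪ Y ∪ {b}, and the maps f : X → Y, g : X ∪ {a} → Y ∪ {b} (with g↾X = f, g(a) = b) is a pushout in the category of metric spaces with non-expansive maps: for any non-expansive maps p : X ∪ {a} → W and q : Y → W with p↾X = q ∘ f, there is a unique non-expansive h : Y ∪ {b} → W with h↾Y = q and h(b) = p(a). -/

import Mathlib

/-- The metric of the one-point extension `X ∪ {a}` (encoded as `Option X`). -/
noncomputable def extDistX {X : Type} [MetricSpace X] (dA : X → ℝ) :
    Option X → Option X → ℝ
  | some x, some x' => dist x x'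
  | some x, none => dA x
  | none, some x => dA x
  | none, none => 0

/-- The distance on `Y ∪ {b}` given by `d(y,b) = min_{x ∈ X} (d(y,f(x)) + d(x,a))`. -/
noncomputable def extDist {X Y : Type} [MetricSpace X] [Fintype X] [Nonempty X]
    [MetricSpace Y] (f : X → Y) (dA : X → ℝ) : Option Y → Option Y → ℝ
  | some y, some y' => dist y y'
  | some y, none => Finset.univ.inf' Finset.univ_nonempty fun x => dist y (f x) + dA x
  | none, some y => Finset.univ.inf' Finset.univ_nonempty fun x => dist y (f x) + dA x
  | none, none => 0

section

variable {X Y W : Type} [MetricSpace X] [Fintype X] [Nonempty X] [MetricSpace Y] [MetricSpace W]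
  {f : X → Y} {dA : X → ℝ} {q : Y → W}

lemma dist_le_extDist_none_some (hq : ∀ y y' : Y, dist (q y) (q y') ≤ dist y y') {w : W}
    (hw : ∀ x, dist w (q (f x)) ≤ dA x) (y : Y) :
    dist w (q y) ≤ extDist f dA none (some y) :=
  Finset.le_inf' Finset.univ_nonempty _ fun x _ => calc
    dist w (q y) ≤ dist w (q (f x)) + dist (q (f x)) (q y) := dist_triangle _ _ _
    _ ≤ dA x + dist y (f x) := add_le_add (hw x) (by rw [dist_comm y]; exact hq _ _)
    _ = dist y (f x) + dA x := add_comm _ _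

lemma dist_optionElim_le_extDist (hq : ∀ y y' : Y, dist (q y) (q y') ≤ dist y y') {w : W}
    (hw : ∀ x, dist w (q (f x)) ≤ dA x) :
    ∀ u v : Option Y, dist (u.elim w q) (v.elim w q) ≤ extDist f dA u v
  | none, none => by simp [extDist]
  | none, some y => dist_le_extDist_none_some hq hw y
  | some y, none => by rw [dist_comm]; exact dist_le_extDist_none_some hq hw y
  | some y, some y' => hq y y'

end

theorem stmt2_general {X Y W : Type} [MetricSpace X] [Fintype X] [Nonempty X] [MetricSpace Y]
    [MetricSpace W]
    (f : X → Y)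
    (dA : X → ℝ)
    (p : Option X → W) (hp : ∀ u v : Option X, dist (p u) (p v) ≤ extDistX dA u v)
    (q : Y → W) (hq : ∀ y y' : Y, dist (q y) (q y') ≤ dist y y')
    (hcomm : ∀ x : X, p (some x) = q (f x)) :
    ∃! h : Option Y → W, (∀ y : Y, h (some y) = q y) ∧ h none = p none ∧
      ∀ u v : Option Y, dist (h u) (h v) ≤ extDist f dA u v := by
  have hw : ∀ x, dist (p none) (q (f x)) ≤ dA x := fun x => by
    rw [← hcomm x]; exact hp none (some x)
  refine ⟨fun u => u.elim (p none) q,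
    ⟨fun _ => rfl, rfl, dist_optionElim_le_extDist hq hw⟩, ?_⟩
  rintro h ⟨h_some, h_none, -⟩
  funext u
  cases u with
  | none => exact h_none
  | some y => exact h_some y

/-- the square formed by the inclusions `X ↪ X ∪ {a}`, `Y ↪ Y ∪ {b}`
and the maps `f : X → Y`, `g = Option.map f : X ∪ {a} → Y ∪ {b}` is a pushout in
the category of metric spaces with non-expansive maps: for any metric space `W`,
any non-expansive `p : X ∪ {a} → W` and `q : Y → W` with `p↾X = q ∘ f`, there is a
unique non-expansive `h : Y ∪ {b} → W` with `h↾Y = q` and `h(b) = p(a)`. -/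
theorem stmt2 {X Y W : Type} [MetricSpace X] [Fintype X] [Nonempty X] [MetricSpace Y]
    [MetricSpace W]
    (f : X → Y) (hf : ∀ p q : X, dist (f p) (f q) ≤ dist p q)
    (dA : X → ℝ) (hpos : ∀ x, 0 < dA x)
    (htri1 : ∀ x x' : X, dist x x' ≤ dA x + dA x')
    (htri2 : ∀ x x' : X, dA x ≤ dist x x' + dA x')
    (p : Option X → W) (hp : ∀ u v : Option X, dist (p u) (p v) ≤ extDistX dA u v)
    (q : Y → W) (hq : ∀ y y' : Y, dist (q y) (q y') ≤ dist y y')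
    (hcomm : ∀ x : X, p (some x) = q (f x)) :
    ∃! h : Option Y → W, (∀ y : Y, h (some y) = q y) ∧ h none = p none ∧
      ∀ u v : Option Y, dist (h u) (h v) ≤ extDist f dA u v :=
  stmt2_general f dA p hp q hq hcomm
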